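/- Let p, p' be probability mass functions on {1,…,n}, let Y = (Y₁,…,Y_N) be i.i.d. samples from p, and let m̂ be the maximum likelihood decision between p and p'. Then the probability that the ML decision errs (chooses p' when p is true) is at most (∑ₖ √(p(k)p'(k)))^N. -/

import Mathlib

/-!
On the error event `∏ p(yᵢ) ≤ ∏ p'(yᵢ)` the likelihood under `p` is at most the geometric mean
`√(∏ p(yᵢ) · ∏ p'(yᵢ)) = ∏ √(p(yᵢ) p'(yᵢ))`. This bound is nonnegative everywhere, so the sum may be
extended to all sample sequences, where it factorizes into the `N`-th power of the Bhattacharyya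
coefficient `∑ₖ √(p(k) p'(k))`.
-/

open Real

lemma le_sqrt_mul_of_le {a b : ℝ} (ha : 0 ≤ a) (hab : a ≤ b) : a ≤ √(a * b) :=
  calc a = √(a * a) := (sqrt_mul_self ha).symm
    _ ≤ √(a * b) := sqrt_le_sqrt (mul_le_mul_of_nonneg_left hab ha)

lemma prod_le_prod_sqrt_mul_of_prod_le {ι : Type*} [Fintype ι] {f g : ι → ℝ}
    (hf : ∀ i, 0 ≤ f i) (hg : ∀ i, 0 ≤ g i) (hfg : ∏ i, f i ≤ ∏ i, g i) :
    ∏ i, f i ≤ ∏ i, √(f i * g i) := by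
  rw [← sqrt_prod _ fun i _ => mul_nonneg (hf i) (hg i), Finset.prod_mul_distrib]
  exact le_sqrt_mul_of_le (Finset.prod_nonneg fun i _ => hf i) hfg

theorem stmt_9 (n N : ℕ) (p p' : Fin n → ℝ)
    (hp : ∀ k, 0 ≤ p k) (hp' : ∀ k, 0 ≤ p' k) :
    ∑ y ∈ Finset.univ.filter
        (fun y : Fin N → Fin n => ∏ i, p (y i) ≤ ∏ i, p' (y i)),
        ∏ i, p (y i)
      ≤ (∑ k, Real.sqrt (p k * p' k)) ^ N := by
  set errorEvent := Finset.univ.filter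
    (fun y : Fin N → Fin n => ∏ i, p (y i) ≤ ∏ i, p' (y i))
  calc ∑ y ∈ errorEvent, ∏ i, p (y i)
      ≤ ∑ y ∈ errorEvent, ∏ i, √(p (y i) * p' (y i)) :=
        Finset.sum_le_sum fun y hy =>
          prod_le_prod_sqrt_mul_of_prod_le (fun i => hp _) (fun i => hp' _)
            (Finset.mem_filter.mp hy).2
    _ ≤ ∑ y : Fin N → Fin n, ∏ i, √(p (y i) * p' (y i)) :=
        Finset.sum_le_sum_of_subset_of_nonneg (Finset.filter_subset _ _)
          fun _ _ _ => Finset.prod_nonneg fun _ _ => sqrt_nonneg _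
    _ = (∑ k, √(p k * p' k)) ^ N := by
        rw [Finset.sum_pow', Fintype.piFinset_univ]
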